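/- Let g : ℝⁿ → ℝ be continuously differentiable with ‖∇g(x)‖ > 0 whenever g(x) ≠ 0, let α > 0, and let x : [0, ∞) → ℝⁿ solve the ODE ẋ(t) = −(∇f(x(t)) + λ(x(t))∇g(x(t))) where λ(x) = (−⟨∇g(x), ∇f(x)⟩ + α g(x))/‖∇g(x)‖². Then g(x(t)) = e^{−αt} g(x(0)) for all t ≥ 0. -/

import Mathlib

open RealInnerProductSpace

/-!
Along the flow, the chain rule gives `d/dt g(x t) = ⟪∇g(x t), ẋ t⟫`, and the multiplier `λ` is
chosen exactly so that this inner product equals `-α g(x t)`. The scalar function `g ∘ x` thus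
solves the linear ODE `h' = -α h` on `[0, ∞)`, whose only solution is `h t = exp (-α t) h 0`.
-/

section LinearODE

variable {E : Type*} [NormedAddCommGroup E] [NormedSpace ℝ E]

/-- `exp (-c s) • h s` has zero derivative, hence is constant. -/
theorem eq_exp_mul_smul_of_hasDerivAt_eq_smul {h : ℝ → E} {c : ℝ}
    (hh : ∀ t, 0 ≤ t → HasDerivAt h (c • h t) t) :
    ∀ t, 0 ≤ t → h t = Real.exp (c * t) • h 0 := by
  intro t ht
  set φ : ℝ → E := fun s => Real.exp (-c * s) • h s
  have hφ_deriv : ∀ s, 0 ≤ s → HasDerivAt φ 0 s := by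
    intro s hs
    have hexp : HasDerivAt (fun u => Real.exp (-c * u)) (Real.exp (-c * s) * -c) s := by
      simpa using ((hasDerivAt_id s).const_mul (-c)).exp
    refine (hexp.smul (hh s hs)).congr_deriv ?_
    rw [smul_smul, ← add_smul]
    ring_nf
    exact zero_smul ℝ _
  have hφ_const : φ t = φ 0 :=
    constant_of_has_deriv_right_zero
      (fun s hs => (hφ_deriv s hs.1).continuousAt.continuousWithinAt)
      (fun s hs => (hφ_deriv s hs.1).hasDerivWithinAt) t (Set.right_mem_Icc.mpr ht)
  simp only [φ, mul_zero, Real.exp_zero, one_smul] at hφ_const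
  rw [← hφ_const, smul_smul, ← Real.exp_add]
  simp

end LinearODE

section InnerProduct

variable {E : Type*} [NormedAddCommGroup E] [InnerProductSpace ℝ E]

theorem inner_neg_add_div_norm_sq_smul_self {u w : E} {a : ℝ} (ha : u = 0 → a = 0) :
    ⟪u, -(w + ((-⟪u, w⟫ + a) / ‖u‖ ^ 2) • u)⟫ = -a := by
  rcases eq_or_ne u 0 with rfl | hu
  · simp [ha rfl]
  · have hnorm : ‖u‖ ^ 2 ≠ 0 := by positivity
    rw [inner_neg_right, inner_add_right, real_inner_smul_right, real_inner_self_eq_norm_sq]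
    field_simp
    ring

theorem HasDerivAt.hasDerivAt_comp_inner_gradient [CompleteSpace E] {g : E → ℝ} {x : ℝ → E} {v : E} {t : ℝ}
    (hg : DifferentiableAt ℝ g (x t)) (hx : HasDerivAt x v t) :
    HasDerivAt (fun s => g (x s)) ⟪gradient g (x t), v⟫ t :=
  hg.hasGradientAt.hasFDerivAt.comp_hasDerivAt t hx

end InnerProduct

theorem ccgf_constraint_decay_general {n : ℕ}
    (f g : EuclideanSpace ℝ (Fin n) → ℝ)
    (hg : ContDiff ℝ 1 g)
    (hg' : ∀ y, g y ≠ 0 → gradient g y ≠ 0)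
    (α : ℝ)
    (x : ℝ → EuclideanSpace ℝ (Fin n))
    (hx : ∀ t, 0 ≤ t →
      HasDerivAt x
        (-(gradient f (x t) +
          ((-(⟪gradient g (x t), gradient f (x t)⟫) + α * g (x t)) /
              ‖gradient g (x t)‖ ^ 2) • gradient g (x t))) t) :
    ∀ t, 0 ≤ t → g (x t) = Real.exp (-α * t) * g (x 0) := by
  refine eq_exp_mul_smul_of_hasDerivAt_eq_smul fun t ht => ?_
  have hchain := (hx t ht).hasDerivAt_comp_inner_gradient
    ((hg.differentiable one_ne_zero) (x t))
  have hzero : gradient g (x t) = 0 → α * g (x t) = 0 := fun h0 => by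
    rw [not_imp_not.mp (hg' (x t)) h0, mul_zero]
  rw [inner_neg_add_div_norm_sq_smul_self hzero] at hchain
  simpa [neg_mul] using hchain

/-- Exponential decay of the constraint function along the Euclidean
constraint controlled gradient flow. -/
theorem ccgf_constraint_decay {n : ℕ}
    (f g : EuclideanSpace ℝ (Fin n) → ℝ)
    (hf : ContDiff ℝ 1 f) (hg : ContDiff ℝ 1 g)
    (hg' : ∀ y, g y ≠ 0 → gradient g y ≠ 0)
    (α : ℝ) (hα : 0 < α)
    (x : ℝ → EuclideanSpace ℝ (Fin n))
    (hx : ∀ t, 0 ≤ t →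
      HasDerivAt x
        (-(gradient f (x t) +
          ((-(⟪gradient g (x t), gradient f (x t)⟫) + α * g (x t)) /
              ‖gradient g (x t)‖ ^ 2) • gradient g (x t))) t) :
    ∀ t, 0 ≤ t → g (x t) = Real.exp (-α * t) * g (x 0) :=
  ccgf_constraint_decay_general f g hg hg' α x hx
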